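/- arXiv:1006.1841 — 2 statements merged into one kernel-verified Lean document; each statement's English description precedes it below -/
import Mathlib

section
/- Let f : Ω → ℝ be a nonvanishing real-valued C² function on an open set Ω ⊆ ℝ². If W : Ω → ℂ is a C² solution of the Vekua equation VW = 0, then its derivative Ẇ = V̄W satisfies the successor Vekua equation V₁(V̄W) = 0 on Ω. -/
noncomputable section

/-- Points of the plane ℝ². -/
abbrev P2 := EuclideanSpace ℝ (Fin 2)

/-- Partial derivatives ∂ₓ, ∂_y of a complex-valued function on the plane. -/
def pdx (F : P2 → ℂ) : P2 → ℂ := fun p => fderiv ℝ F p (EuclideanSpace.single 0 1)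
def pdy (F : P2 → ℂ) : P2 → ℂ := fun p => fderiv ℝ F p (EuclideanSpace.single 1 1)

/-- ∂_z = ½(∂ₓ − i∂_y). -/
def dz (F : P2 → ℂ) : P2 → ℂ := fun p => (pdx F p - Complex.I * pdy F p) / 2

/-- ∂_z̄ = ½(∂ₓ + i∂_y). -/
def dzbar (F : P2 → ℂ) : P2 → ℂ := fun p => (pdx F p + Complex.I * pdy F p) / 2

/-- The Laplacian Δ = ∂ₓ² + ∂_y². -/
def lap2 (F : P2 → ℂ) : P2 → ℂ := fun p => pdx (pdx F) p + pdy (pdy F) p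

/-- V = ∂_z̄ − (∂_z̄ f/f) C. -/
def Vop (f W : P2 → ℂ) : P2 → ℂ :=
  fun p => dzbar W p - (dzbar f p / f p) * (starRingEnd ℂ) (W p)

/-- V̄ = ∂_z − (∂_z f/f) C. -/
def Vbarop (f W : P2 → ℂ) : P2 → ℂ :=
  fun p => dz W p - (dz f p / f p) * (starRingEnd ℂ) (W p)

/-- V₁ = ∂_z̄ + (∂_z f/f) C. -/
def V1op (f W : P2 → ℂ) : P2 → ℂ :=
  fun p => dzbar W p + (dz f p / f p) * (starRingEnd ℂ) (W p)

/-- V̄₁ = ∂_z + (∂_z̄ f/f) C. -/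
def Vbar1op (f W : P2 → ℂ) : P2 → ℂ :=
  fun p => dz W p + (dzbar f p / f p) * (starRingEnd ℂ) (W p)

/-! Put `a = f_z̄ / f` and `b = f_z / f`; as `f` is real, `b = ā`. Expanding, the terms
`b (W̄)_z̄` and `b conj (W_z)` cancel and `V₁ V̄ W = W_zz̄ - b_z̄ W̄ - |b|² W`. Applying `∂_z` to the
Vekua equation `W_z̄ = a W̄` gives `W_z̄z = a_z W̄ + |a|² W`. The two agree since second
derivatives commute and `a_z = b_z̄`, both being `∂_z ∂_z̄ log f`. -/

open ComplexConjugate Filter Topology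

section Calculus

variable {E : Type*} [NormedAddCommGroup E] [NormedSpace ℝ E] {F G : E → ℂ} {p : E}

theorem fderiv_conj_apply (v : E) :
    fderiv ℝ (fun q => conj (F q)) p v = conj (fderiv ℝ F p v) := by
  simpa using congr($(fderiv_star (𝕜 := ℝ) (f := F) (x := p)) v)

theorem fderiv_inv_apply (hF : DifferentiableAt ℝ F p) (hF0 : F p ≠ 0) (v : E) :
    fderiv ℝ (fun q => (F q)⁻¹) p v = -fderiv ℝ F p v / F p ^ 2 := by
  rw [show (fun q => (F q)⁻¹) = Inv.inv ∘ F from rfl, fderiv_comp p (differentiableAt_inv hF0) hF,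
    fderiv_inv' hF0]
  simp only [ContinuousLinearMap.neg_comp, neg_apply, ContinuousLinearMap.comp_apply,
    ContinuousLinearMap.mulLeftRight_apply]
  field_simp

theorem DifferentiableAt.complex_div (hF : DifferentiableAt ℝ F p) (hG : DifferentiableAt ℝ G p)
    (hG0 : G p ≠ 0) : DifferentiableAt ℝ (fun q => F q / G q) p := by
  simpa only [div_eq_mul_inv] using hF.fun_mul (hG.fun_inv hG0)

theorem hasFDerivAt_fderiv_apply (hF : DifferentiableAt ℝ (fderiv ℝ F) p) (v : E) :
    HasFDerivAt (fun q => fderiv ℝ F q v) ((fderiv ℝ (fderiv ℝ F) p).flip v) p := by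
  simpa using hF.hasFDerivAt.clm_apply (hasFDerivAt_const v p)

theorem fderiv_fderiv_apply_add_mul_div_two (hF : DifferentiableAt ℝ (fderiv ℝ F) p) (c : ℂ)
    (v w : E) :
    fderiv ℝ (fun q => (fderiv ℝ F q v + c * fderiv ℝ F q w) / 2) p
      = (2⁻¹ : ℂ) • ((fderiv ℝ (fderiv ℝ F) p).flip v + c • (fderiv ℝ (fderiv ℝ F) p).flip w) := by
  refine HasFDerivAt.fderiv ?_
  simp_rw [div_eq_mul_inv, mul_comm _ (2⁻¹ : ℂ)]
  exact ((hasFDerivAt_fderiv_apply hF v).add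
    ((hasFDerivAt_fderiv_apply hF w).const_mul c)).const_mul _

end Calculus

section Wirtinger

variable {F G : P2 → ℂ} {p : P2}

theorem Filter.EventuallyEq.dz_eq (h : F =ᶠ[𝓝 p] G) : dz F p = dz G p := by
  simp only [dz, pdx, pdy, h.fderiv_eq]

theorem ContDiffAt.dz {n m : WithTop ℕ∞} (hF : ContDiffAt ℝ n F p) (hmn : m + 1 ≤ n) :
    ContDiffAt ℝ m (dz F) p := by
  have h := hF.fderiv_right hmn
  exact ((h.clm_apply contDiffAt_const).sub
    (contDiffAt_const.mul (h.clm_apply contDiffAt_const))).div_const 2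

theorem ContDiffAt.dzbar {n m : WithTop ℕ∞} (hF : ContDiffAt ℝ n F p) (hmn : m + 1 ≤ n) :
    ContDiffAt ℝ m (dzbar F) p := by
  have h := hF.fderiv_right hmn
  exact ((h.clm_apply contDiffAt_const).add
    (contDiffAt_const.mul (h.clm_apply contDiffAt_const))).div_const 2

theorem dz_mul (hF : DifferentiableAt ℝ F p) (hG : DifferentiableAt ℝ G p) :
    dz (fun q => F q * G q) p = dz F p * G p + F p * dz G p := by
  simp only [dz, pdx, pdy, fderiv_fun_mul hF hG, FunLike.coe_add, Pi.add_apply,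
    FunLike.coe_smul, Pi.smul_apply, smul_eq_mul]
  ring

theorem dzbar_mul (hF : DifferentiableAt ℝ F p) (hG : DifferentiableAt ℝ G p) :
    dzbar (fun q => F q * G q) p = dzbar F p * G p + F p * dzbar G p := by
  simp only [dzbar, pdx, pdy, fderiv_fun_mul hF hG, FunLike.coe_add, Pi.add_apply,
    FunLike.coe_smul, Pi.smul_apply, smul_eq_mul]
  ring

theorem dzbar_sub (hF : DifferentiableAt ℝ F p) (hG : DifferentiableAt ℝ G p) :
    dzbar (fun q => F q - G q) p = dzbar F p - dzbar G p := by
  simp only [dzbar, pdx, pdy, fderiv_fun_sub hF hG, FunLike.coe_sub, Pi.sub_apply]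
  ring

theorem dz_conj : dz (fun q => conj (F q)) p = conj (dzbar F p) := by
  simp only [dz, dzbar, pdx, pdy, fderiv_conj_apply, map_div₀, map_add, map_mul, Complex.conj_I,
    map_ofNat]
  ring

theorem dzbar_conj : dzbar (fun q => conj (F q)) p = conj (dz F p) := by
  simp only [dz, dzbar, pdx, pdy, fderiv_conj_apply, map_div₀, map_sub, map_mul, Complex.conj_I,
    map_ofNat]
  ring

theorem conj_dz_ofReal (f : P2 → ℝ) (p : P2) :
    conj (dz (fun x => (f x : ℂ)) p) = dzbar (fun x => (f x : ℂ)) p := by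
  simp [← dzbar_conj]

theorem dz_div (hF : DifferentiableAt ℝ F p) (hG : DifferentiableAt ℝ G p) (hG0 : G p ≠ 0) :
    dz (fun q => F q / G q) p = (dz F p * G p - F p * dz G p) / G p ^ 2 := by
  simp only [div_eq_mul_inv]
  rw [dz_mul hF (hG.fun_inv hG0)]
  simp only [dz, pdx, pdy, fderiv_inv_apply hG hG0]
  field_simp
  ring

theorem dzbar_div (hF : DifferentiableAt ℝ F p) (hG : DifferentiableAt ℝ G p) (hG0 : G p ≠ 0) :
    dzbar (fun q => F q / G q) p = (dzbar F p * G p - F p * dzbar G p) / G p ^ 2 := by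
  simp only [div_eq_mul_inv]
  rw [dzbar_mul hF (hG.fun_inv hG0)]
  simp only [dzbar, pdx, pdy, fderiv_inv_apply hG hG0]
  field_simp
  ring

theorem dz_dzbar_eq_dzbar_dz (hF : ContDiffAt ℝ 2 F p) : dz (dzbar F) p = dzbar (dz F) p := by
  have hD : DifferentiableAt ℝ (fderiv ℝ F) p :=
    (hF.fderiv_right (m := 1) le_rfl).differentiableAt one_ne_zero
  have hsymm := hF.isSymmSndFDerivAt (by simp) (EuclideanSpace.single 0 1)
    (EuclideanSpace.single 1 1)
  have hdz : dz F = fun q => (fderiv ℝ F q (EuclideanSpace.single 0 1)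
      + -Complex.I * fderiv ℝ F q (EuclideanSpace.single 1 1)) / 2 := by
    funext q; simp only [dz, pdx, pdy]; ring
  rw [hdz, show dzbar F = fun q => (fderiv ℝ F q (EuclideanSpace.single 0 1)
      + Complex.I * fderiv ℝ F q (EuclideanSpace.single 1 1)) / 2 from rfl]
  simp only [dz, dzbar, pdx, pdy, fderiv_fderiv_apply_add_mul_div_two hD, add_apply, smul_apply,
    ContinuousLinearMap.flip_apply, smul_eq_mul]
  linear_combination (Complex.I / 2) * hsymm

-- Both sides are `(F F_zz̄ - F_z F_z̄) / F²`, i.e. `∂_z ∂_z̄ log F`.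
theorem dzbar_dz_div_self (hF : ContDiffAt ℝ 2 F p) (hF0 : F p ≠ 0) :
    dzbar (fun q => dz F q / F q) p = dz (fun q => dzbar F q / F q) p := by
  have hFd := hF.differentiableAt two_ne_zero
  rw [dzbar_div ((hF.dz (m := 1) le_rfl).differentiableAt one_ne_zero) hFd hF0,
    dz_div ((hF.dzbar (m := 1) le_rfl).differentiableAt one_ne_zero) hFd hF0,
    dz_dzbar_eq_dzbar_dz hF]
  ring

end Wirtinger

theorem V1op_Vbarop_eq_zero {f : P2 → ℝ} {W : P2 → ℂ} {p : P2}
    (hf : ContDiffAt ℝ 2 f p) (hf0 : f p ≠ 0) (hW : ContDiffAt ℝ 2 W p)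
    (hVek : ∀ᶠ q in 𝓝 p, Vop (fun x => (f x : ℂ)) W q = 0) :
    V1op (fun x => (f x : ℂ)) (Vbarop (fun x => (f x : ℂ)) W) p = 0 := by
  set F : P2 → ℂ := fun x => (f x : ℂ)
  have hF : ContDiffAt ℝ 2 F p := Complex.ofRealCLM.contDiff.contDiffAt.comp p hf
  have hF0 : F p ≠ 0 := Complex.ofReal_ne_zero.mpr hf0
  have hFd := hF.differentiableAt two_ne_zero
  have hWcd : DifferentiableAt ℝ (fun q => conj (W q)) p := (hW.differentiableAt two_ne_zero).star
  have hdzWd := (hW.dz (m := 1) le_rfl).differentiableAt one_ne_zero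
  have had := ((hF.dzbar (m := 1) le_rfl).differentiableAt one_ne_zero).complex_div hFd hF0
  have hbd := ((hF.dz (m := 1) le_rfl).differentiableAt one_ne_zero).complex_div hFd hF0
  have hVW : dzbar W =ᶠ[𝓝 p] fun q => dzbar F q / F q * conj (W q) :=
    hVek.mono fun q hq => sub_eq_zero.mp hq
  have hab : conj (dz F p / F p) = dzbar F p / F p := by
    rw [map_div₀, conj_dz_ofReal, Complex.conj_ofReal]
  have hba : conj (dzbar F p / F p) = dz F p / F p := by rw [← hab, Complex.conj_conj]
  have h_dz_dzbar : dz (dzbar W) p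
      = dz (fun q => dzbar F q / F q) p * conj (W p)
        + dzbar F p / F p * conj (dzbar F p / F p) * W p := by
    rw [hVW.dz_eq, dz_mul had hWcd, dz_conj, hVW.eq_of_nhds, map_mul, Complex.conj_conj]
    ring
  have h_dzbar_Vbar : dzbar (Vbarop F W) p
      = dzbar (dz W) p - (dzbar (fun q => dz F q / F q) p * conj (W p)
        + dz F p / F p * conj (dz W p)) := by
    rw [show Vbarop F W = fun q => dz W q - dz F q / F q * conj (W q) from rfl,
      dzbar_sub hdzWd (hbd.fun_mul hWcd), dzbar_mul hbd hWcd, dzbar_conj]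
  simp only [V1op, h_dzbar_Vbar, ← dz_dzbar_eq_dzbar_dz hW, h_dz_dzbar,
    dzbar_dz_div_self hF hF0, Vbarop, map_sub, map_mul, Complex.conj_conj, hab, hba]
  ring

/-- the derivative Ẇ = V̄W of a solution of VW = 0 solves
    the successor Vekua equation V₁Ẇ = 0. -/
theorem statement3 (Ω : Set P2) (hΩ : IsOpen Ω)
    (f : P2 → ℝ) (hf : ContDiffOn ℝ 2 f Ω) (hf0 : ∀ p ∈ Ω, f p ≠ 0)
    (W : P2 → ℂ) (hW : ContDiffOn ℝ 2 W Ω)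
    (hVek : ∀ p ∈ Ω, Vop (fun x => (f x : ℂ)) W p = 0) :
    ∀ p ∈ Ω, V1op (fun x => (f x : ℂ)) (Vbarop (fun x => (f x : ℂ)) W) p = 0 := by
  intro p hp
  have hΩp : Ω ∈ 𝓝 p := hΩ.mem_nhds hp
  exact V1op_Vbarop_eq_zero (hf.contDiffAt hΩp) (hf0 p hp) (hW.contDiffAt hΩp)
    (eventually_of_mem hΩp hVek)
end
end

section
/- Let f : Ω → ℂ be a nonvanishing scalar C² function on an open set Ω ⊆ ℝ³ and set q = Δf/f. If W = W₀ + 𝐖 : Ω → ℍ(ℂ) is a C² solution of the main Vekua equation DW − (Df/f)·C_H W = 0, then: (i) the scalar part W₀ satisfies (−Δ + q)W₀ = 0; (ii) φ₀ = W₀/f satisfies div(f²∇φ₀) = 0; (iii) the vector field 𝚽 = f𝐖 satisfies div 𝚽 = 0; and (iv) 𝚽 satisfies rot(f⁻² rot 𝚽) = 0. -/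
open Quaternion

noncomputable section

/-- Points of ℝ³. -/
abbrev P3 := EuclideanSpace ℝ (Fin 3)

/-- Partial derivative ∂ₖ of a complex-valued function on ℝ³. -/
def pd (k : Fin 3) (F : P3 → ℂ) : P3 → ℂ :=
  fun p => fderiv ℝ F p (EuclideanSpace.single k 1)

/-- The Laplacian Δ = ∂₁² + ∂₂² + ∂₃². -/
def lap3 (F : P3 → ℂ) : P3 → ℂ := fun p => ∑ k : Fin 3, pd k (pd k F) p

/-- Embedding of a complex scalar as a quaternion. -/
def qC (z : ℂ) : ℍ[ℂ] := ⟨z, 0, 0, 0⟩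

/-- The quaternionic imaginary units e₁, e₂, e₃. -/
def qe : Fin 3 → ℍ[ℂ] := ![⟨0,1,0,0⟩, ⟨0,0,1,0⟩, ⟨0,0,0,1⟩]

/-- The eₖ-components of a quaternion. -/
def qcomp : Fin 3 → ℍ[ℂ] → ℂ := ![QuaternionAlgebra.imI, QuaternionAlgebra.imJ, QuaternionAlgebra.imK]

/-- Quaternionic conjugation C_H. -/
def CH (q : ℍ[ℂ]) : ℍ[ℂ] := ⟨q.re, -q.imI, -q.imJ, -q.imK⟩

/-- Componentwise partial derivative of a quaternion-valued function. -/
def pdq (k : Fin 3) (W : P3 → ℍ[ℂ]) : P3 → ℍ[ℂ] :=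
  fun p => ⟨pd k (fun x => (W x).re) p, pd k (fun x => (W x).imI) p,
            pd k (fun x => (W x).imJ) p, pd k (fun x => (W x).imK) p⟩

/-- The Dirac (Moisil–Theodorescu) operator D Q = Σₖ eₖ ∂ₖ Q. -/
def Dq (W : P3 → ℍ[ℂ]) : P3 → ℍ[ℂ] := fun p => ∑ k : Fin 3, qe k * pdq k W p

/-- The right Dirac operator Dᵣ Q = Σₖ (∂ₖ Q) eₖ. -/
def Drq (W : P3 → ℍ[ℂ]) : P3 → ℍ[ℂ] := fun p => ∑ k : Fin 3, pdq k W p * qe k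

/-- Gradient of a scalar function viewed as a purely vectorial quaternion. -/
def gradq (F : P3 → ℂ) : P3 → ℍ[ℂ] := fun p => ⟨0, pd 0 F p, pd 1 F p, pd 2 F p⟩

/-- Divergence of (the vector part of) a quaternion-valued function. -/
def divq (W : P3 → ℍ[ℂ]) : P3 → ℂ :=
  fun p => pd 0 (fun x => (W x).imI) p + pd 1 (fun x => (W x).imJ) p + pd 2 (fun x => (W x).imK) p

/-- Rotor (curl) of (the vector part of) a quaternion-valued function. -/
def rotq (W : P3 → ℍ[ℂ]) : P3 → ℍ[ℂ] :=
  fun p => ⟨0,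
    pd 1 (fun x => (W x).imK) p - pd 2 (fun x => (W x).imJ) p,
    pd 2 (fun x => (W x).imI) p - pd 0 (fun x => (W x).imK) p,
    pd 0 (fun x => (W x).imJ) p - pd 1 (fun x => (W x).imI) p⟩

/-- Cross product of the vector parts of two quaternions. -/
def crossq (u v : ℍ[ℂ]) : ℍ[ℂ] :=
  ⟨0, u.imJ * v.imK - u.imK * v.imJ, u.imK * v.imI - u.imI * v.imK, u.imI * v.imJ - u.imJ * v.imI⟩

/-- Bilinear scalar product of the vector parts of two quaternions. -/
def dotq (u v : ℍ[ℂ]) : ℂ := u.imI * v.imI + u.imJ * v.imJ + u.imK * v.imK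

/-- `Cⁿ` smoothness of a quaternion-valued function on a set, componentwise. -/
def QContDiffOn (n : ℕ) (W : P3 → ℍ[ℂ]) (Ω : Set P3) : Prop :=
  ContDiffOn ℝ n (fun p => (W p).re) Ω ∧ ContDiffOn ℝ n (fun p => (W p).imI) Ω ∧
  ContDiffOn ℝ n (fun p => (W p).imJ) Ω ∧ ContDiffOn ℝ n (fun p => (W p).imK) Ω

/-- The pure-quaternion Df/f built from a nonvanishing scalar function f. -/
def DfF (f : P3 → ℂ) : P3 → ℍ[ℂ] := fun p => (f p)⁻¹ • gradq f p

/-! Multiplying the Vekua equation by `f` splits it into a scalar part, `div Φ = 0` for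
`Φ = f𝐖`, and a vector part, `rot Φ = W₀∇f − f∇W₀ = −f²∇φ₀`. So `f²∇φ₀ = −rot Φ` is
divergence free, which is (ii), and gives (i) because `div (f²∇(W₀/f)) = fΔW₀ − W₀Δf`;
and `f⁻² rot Φ = −∇φ₀` is curl free, which is (iv). -/

open Filter Topology

section Components

variable {z : ℂ} {w v : ℍ[ℂ]} {u : P3 → ℂ} {A : P3 → ℍ[ℂ]} {p : P3}

@[simp] lemma qC_re : (qC z).re = z := rfl
@[simp] lemma qC_imI : (qC z).imI = 0 := rfl
@[simp] lemma qC_imJ : (qC z).imJ = 0 := rfl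
@[simp] lemma qC_imK : (qC z).imK = 0 := rfl

@[simp] lemma CH_re : (CH w).re = w.re := rfl
@[simp] lemma CH_imI : (CH w).imI = -w.imI := rfl
@[simp] lemma CH_imJ : (CH w).imJ = -w.imJ := rfl
@[simp] lemma CH_imK : (CH w).imK = -w.imK := rfl

@[simp] lemma crossq_re : (crossq w v).re = 0 := rfl
@[simp] lemma crossq_imI : (crossq w v).imI = w.imJ * v.imK - w.imK * v.imJ := rfl
@[simp] lemma crossq_imJ : (crossq w v).imJ = w.imK * v.imI - w.imI * v.imK := rfl
@[simp] lemma crossq_imK : (crossq w v).imK = w.imI * v.imJ - w.imJ * v.imI := rfl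

@[simp] lemma gradq_re : (gradq u p).re = 0 := rfl
@[simp] lemma gradq_imI : (gradq u p).imI = pd 0 u p := rfl
@[simp] lemma gradq_imJ : (gradq u p).imJ = pd 1 u p := rfl
@[simp] lemma gradq_imK : (gradq u p).imK = pd 2 u p := rfl

@[simp] lemma rotq_re : (rotq A p).re = 0 := rfl
@[simp] lemma rotq_imI :
    (rotq A p).imI = pd 1 (fun x => (A x).imK) p - pd 2 (fun x => (A x).imJ) p := rfl
@[simp] lemma rotq_imJ :
    (rotq A p).imJ = pd 2 (fun x => (A x).imI) p - pd 0 (fun x => (A x).imK) p := rfl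
@[simp] lemma rotq_imK :
    (rotq A p).imK = pd 0 (fun x => (A x).imJ) p - pd 1 (fun x => (A x).imI) p := rfl

lemma qC_add_eq_zero_iff (hv : v.re = 0) : qC z + v = 0 ↔ z = 0 ∧ v = 0 := by
  refine ⟨fun h => ?_, fun ⟨hz, hv⟩ => by ext <;> simp [hz, hv]⟩
  have hz : z = 0 := by simpa [hv] using congrArg QuaternionAlgebra.re h
  exact ⟨hz, by rwa [hz, show qC 0 = 0 by ext <;> rfl, zero_add] at h⟩

end Components

section PartialDerivatives

variable {F G : P3 → ℂ} {p : P3}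

lemma pd_congr_of_eventuallyEq (h : F =ᶠ[𝓝 p] G) (k : Fin 3) : pd k F p = pd k G p := by
  simp only [pd, h.fderiv_eq]

lemma pd_neg (k : Fin 3) : pd k (fun x => -F x) p = -pd k F p := by
  simp [pd, fderiv_fun_neg]

lemma pd_sub (hF : DifferentiableAt ℝ F p) (hG : DifferentiableAt ℝ G p) (k : Fin 3) :
    pd k (fun x => F x - G x) p = pd k F p - pd k G p := by
  simp [pd, fderiv_fun_sub hF hG]

lemma pd_mul (hF : DifferentiableAt ℝ F p) (hG : DifferentiableAt ℝ G p) (k : Fin 3) :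
    pd k (fun x => F x * G x) p = F p * pd k G p + pd k F p * G p := by
  simp only [pd, fderiv_fun_mul hF hG, add_apply, smul_apply, smul_eq_mul]
  ring

lemma pd_inv (hG : DifferentiableAt ℝ G p) (hG0 : G p ≠ 0) (k : Fin 3) :
    pd k (fun x => (G x)⁻¹) p = -pd k G p / G p ^ 2 := by
  have h : HasFDerivAt (fun x => (G x)⁻¹) _ p :=
    (hasFDerivAt_inv' (𝕜 := ℝ) hG0).comp p hG.hasFDerivAt
  simp only [pd, h.fderiv, ContinuousLinearMap.comp_apply, neg_apply,
    ContinuousLinearMap.mulLeftRight_apply]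
  field_simp

lemma pd_div (hF : DifferentiableAt ℝ F p) (hG : DifferentiableAt ℝ G p) (hG0 : G p ≠ 0)
    (k : Fin 3) :
    pd k (fun x => F x / G x) p = (pd k F p * G p - F p * pd k G p) / G p ^ 2 := by
  simp only [div_eq_mul_inv]
  rw [pd_mul (G := fun x => (G x)⁻¹) hF (hG.inv hG0), pd_inv hG hG0]
  field_simp
  ring

lemma differentiableAt_pd (hF : ContDiffAt ℝ 2 F p) (k : Fin 3) :
    DifferentiableAt ℝ (pd k F) p :=
  ((hF.fderiv_right (m := 1) le_rfl).differentiableAt one_ne_zero).clm_apply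
    (differentiableAt_const _)

lemma pd_comm (hF : ContDiffAt ℝ 2 F p) (j k : Fin 3) : pd j (pd k F) p = pd k (pd j F) p := by
  have hd : DifferentiableAt ℝ (fderiv ℝ F) p :=
    (hF.fderiv_right (m := 1) le_rfl).differentiableAt one_ne_zero
  have hsnd (v w : P3) :
      fderiv ℝ (fun x => fderiv ℝ F x w) p v = fderiv ℝ (fderiv ℝ F) p v w := by
    rw [fderiv_clm_apply hd (differentiableAt_const w)]
    simp
  change fderiv ℝ (fun x => fderiv ℝ F x _) p _ = fderiv ℝ (fun x => fderiv ℝ F x _) p _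
  rw [hsnd, hsnd]
  exact hF.isSymmSndFDerivAt (by simp) _ _

end PartialDerivatives

section VectorCalculus

variable {A B : P3 → ℍ[ℂ]} {f u : P3 → ℂ} {p : P3}

lemma divq_congr_of_eventuallyEq (h : A =ᶠ[𝓝 p] B) : divq A p = divq B p := by
  have hc (c : ℍ[ℂ] → ℂ) (k : Fin 3) : pd k (fun x => c (A x)) p = pd k (fun x => c (B x)) p :=
    pd_congr_of_eventuallyEq (h.fun_comp c) k
  simp only [divq, hc QuaternionAlgebra.imI, hc QuaternionAlgebra.imJ, hc QuaternionAlgebra.imK]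

lemma rotq_congr_of_eventuallyEq (h : A =ᶠ[𝓝 p] B) : rotq A p = rotq B p := by
  have hc (c : ℍ[ℂ] → ℂ) (k : Fin 3) : pd k (fun x => c (A x)) p = pd k (fun x => c (B x)) p :=
    pd_congr_of_eventuallyEq (h.fun_comp c) k
  ext <;> simp only [rotq_re, rotq_imI, rotq_imJ, rotq_imK, hc QuaternionAlgebra.imI,
    hc QuaternionAlgebra.imJ, hc QuaternionAlgebra.imK]

lemma divq_neg : divq (fun x => -A x) p = -divq A p := by
  simp only [divq, imI_neg, imJ_neg, imK_neg, pd_neg]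
  ring

lemma rotq_neg : rotq (fun x => -A x) p = -rotq A p := by
  ext <;> simp [pd_neg] <;> ring

lemma divq_rotq_eq_zero (h₁ : ContDiffAt ℝ 2 (fun x => (A x).imI) p)
    (h₂ : ContDiffAt ℝ 2 (fun x => (A x).imJ) p) (h₃ : ContDiffAt ℝ 2 (fun x => (A x).imK) p) :
    divq (rotq A) p = 0 := by
  simp only [divq, rotq]
  rw [pd_sub (differentiableAt_pd h₃ 1) (differentiableAt_pd h₂ 2),
    pd_sub (differentiableAt_pd h₁ 2) (differentiableAt_pd h₃ 0),
    pd_sub (differentiableAt_pd h₂ 0) (differentiableAt_pd h₁ 1)]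
  linear_combination pd_comm h₃ 0 1 - pd_comm h₂ 0 2 + pd_comm h₁ 1 2

lemma rotq_gradq_eq_zero (hu : ContDiffAt ℝ 2 u p) : rotq (gradq u) p = 0 := by
  ext <;> simp [pd_comm hu 1 2, pd_comm hu 2 0, pd_comm hu 0 1]

lemma divq_smul (hf : DifferentiableAt ℝ f p) (h₁ : DifferentiableAt ℝ (fun x => (A x).imI) p)
    (h₂ : DifferentiableAt ℝ (fun x => (A x).imJ) p)
    (h₃ : DifferentiableAt ℝ (fun x => (A x).imK) p) :
    divq (fun x => f x • A x) p = f p * divq A p + dotq (gradq f p) (A p) := by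
  simp only [divq, dotq, imI_smul, imJ_smul, imK_smul, smul_eq_mul, pd_mul hf h₁, pd_mul hf h₂,
    pd_mul hf h₃, gradq_imI, gradq_imJ, gradq_imK]
  ring

lemma rotq_smul (hf : DifferentiableAt ℝ f p) (h₁ : DifferentiableAt ℝ (fun x => (A x).imI) p)
    (h₂ : DifferentiableAt ℝ (fun x => (A x).imJ) p)
    (h₃ : DifferentiableAt ℝ (fun x => (A x).imK) p) :
    rotq (fun x => f x • A x) p = f p • rotq A p + crossq (gradq f p) (A p) := by
  ext <;> simp [pd_mul hf h₁, pd_mul hf h₂, pd_mul hf h₃] <;> ring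

lemma divq_smul_gradq_sub_smul_gradq (hf : ContDiffAt ℝ 2 f p) (hu : ContDiffAt ℝ 2 u p) :
    divq (fun x => f x • gradq u x - u x • gradq f x) p = f p * lap3 u p - u p * lap3 f p := by
  have hf₁ := hf.differentiableAt two_ne_zero
  have hu₁ := hu.differentiableAt two_ne_zero
  have hterm (k : Fin 3) : pd k (fun x => f x * pd k u x - u x * pd k f x) p
      = f p * pd k (pd k u) p - u p * pd k (pd k f) p := by
    rw [pd_sub (hf₁.fun_mul (differentiableAt_pd hu k)) (hu₁.fun_mul (differentiableAt_pd hf k)),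
      pd_mul hf₁ (differentiableAt_pd hu k), pd_mul hu₁ (differentiableAt_pd hf k)]
    ring
  simp only [divq, gradq_imI, gradq_imJ, gradq_imK, imI_sub, imJ_sub, imK_sub, imI_smul, imJ_smul,
    imK_smul, smul_eq_mul, hterm, lap3, Fin.sum_univ_three]
  ring

lemma sq_smul_gradq_div (hu : DifferentiableAt ℝ u p) (hf : DifferentiableAt ℝ f p)
    (hf0 : f p ≠ 0) :
    f p ^ 2 • gradq (fun x => u x / f x) p = f p • gradq u p - u p • gradq f p := by
  ext <;> simp [pd_div hu hf hf0] <;> field_simp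

lemma divq_sq_smul_gradq_div (hf : ContDiffAt ℝ 2 f p) (hu : ContDiffAt ℝ 2 u p)
    (hf0 : f p ≠ 0) :
    divq (fun x => f x ^ 2 • gradq (fun y => u y / f y) x) p
      = f p * lap3 u p - u p * lap3 f p := by
  rw [← divq_smul_gradq_sub_smul_gradq hf hu]
  apply divq_congr_of_eventuallyEq
  filter_upwards [hf.eventually (by simp), hu.eventually (by simp),
    hf.continuousAt.eventually_ne hf0] with x hfx hux hx0
  exact sq_smul_gradq_div (hux.differentiableAt two_ne_zero) (hfx.differentiableAt two_ne_zero) hx0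

end VectorCalculus

lemma Dq_eq (W : P3 → ℍ[ℂ]) (p : P3) :
    Dq W p = qC (-divq W p) + gradq (fun x => (W x).re) p + rotq W p := by
  ext <;> simp only [Dq, Fin.sum_univ_three, re_add, imI_add, imJ_add, imK_add, re_mul, imI_mul,
    imJ_mul, imK_mul] <;> simp [qe, pdq, divq] <;> ring

lemma DfF_mul_CH (f : P3 → ℂ) (p : P3) (w : ℍ[ℂ]) :
    DfF f p * CH w =
      (f p)⁻¹ • (qC (dotq (gradq f p) w) + w.re • gradq f p - crossq (gradq f p) w) := by
  ext <;> simp [DfF, dotq] <;> ring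

section Vekua

variable {f : P3 → ℂ} {W : P3 → ℍ[ℂ]} {p : P3}

lemma smul_vekua_eq (hf : DifferentiableAt ℝ f p) (hf0 : f p ≠ 0)
    (hW₁ : DifferentiableAt ℝ (fun x => (W x).imI) p)
    (hW₂ : DifferentiableAt ℝ (fun x => (W x).imJ) p)
    (hW₃ : DifferentiableAt ℝ (fun x => (W x).imK) p) :
    f p • (Dq W p - DfF f p * CH (W p)) =
      qC (-divq (fun x => f x • im (W x)) p) + (rotq (fun x => f x • im (W x)) p
        - ((W p).re • gradq f p - f p • gradq (fun x => (W x).re) p)) := by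
  rw [divq_smul (A := fun x => im (W x)) hf hW₁ hW₂ hW₃,
    rotq_smul (A := fun x => im (W x)) hf hW₁ hW₂ hW₃, Dq_eq, DfF_mul_CH]
  ext <;> simp [divq, dotq] <;> field_simp <;> ring

lemma divq_rotq_smul_im_of_vekua (hf : DifferentiableAt ℝ f p) (hf0 : f p ≠ 0)
    (hW₁ : DifferentiableAt ℝ (fun x => (W x).imI) p)
    (hW₂ : DifferentiableAt ℝ (fun x => (W x).imJ) p)
    (hW₃ : DifferentiableAt ℝ (fun x => (W x).imK) p)
    (hV : Dq W p - DfF f p * CH (W p) = 0) :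
    divq (fun x => f x • im (W x)) p = 0 ∧
      rotq (fun x => f x • im (W x)) p
        = (W p).re • gradq f p - f p • gradq (fun x => (W x).re) p := by
  have h := smul_vekua_eq hf hf0 hW₁ hW₂ hW₃
  rwa [hV, smul_zero, eq_comm, qC_add_eq_zero_iff (by simp), neg_eq_zero, sub_eq_zero] at h

end Vekua

/-- if W = W₀ + 𝐖 solves the main Vekua equation, then
    (i) (−Δ+q)W₀ = 0 with q = Δf/f; (ii) div(f²∇(W₀/f)) = 0;
    (iii) div(f𝐖) = 0; (iv) rot(f⁻² rot(f𝐖)) = 0. -/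
theorem statement6 (Ω : Set P3) (hΩ : IsOpen Ω)
    (f : P3 → ℂ) (hf : ContDiffOn ℝ 2 f Ω) (hf0 : ∀ p ∈ Ω, f p ≠ 0)
    (W : P3 → ℍ[ℂ]) (hW : QContDiffOn 2 W Ω)
    (hVek : ∀ p ∈ Ω, Dq W p - DfF f p * CH (W p) = 0) :
    ∀ p ∈ Ω,
      (-(lap3 (fun x => (W x).re) p) + (lap3 f p / f p) * (W p).re = 0) ∧
      (∑ k : Fin 3, pd k (fun x => (f x) ^ 2 * pd k (fun y => (W y).re / f y) x) p = 0) ∧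
      (divq (fun x => f x • Quaternion.im (W x)) p = 0) ∧
      (rotq (fun x => ((f x) ^ 2)⁻¹ • rotq (fun y => f y • Quaternion.im (W y)) x) p = 0) := by
  obtain ⟨hW₀, hW₁, hW₂, hW₃⟩ := hW
  have hC2 {g : P3 → ℂ} (hg : ContDiffOn ℝ 2 g Ω) {x : P3} (hx : x ∈ Ω) : ContDiffAt ℝ 2 g x :=
    hg.contDiffAt (hΩ.mem_nhds hx)
  have hC1 {g : P3 → ℂ} (hg : ContDiffOn ℝ 2 g Ω) {x : P3} (hx : x ∈ Ω) :
      DifferentiableAt ℝ g x :=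
    (hC2 hg hx).differentiableAt two_ne_zero
  have hvek (x : P3) (hx : x ∈ Ω) := divq_rotq_smul_im_of_vekua (hC1 hf hx) (hf0 x hx)
    (hC1 hW₁ hx) (hC1 hW₂ hx) (hC1 hW₃ hx) (hVek x hx)
  have hrot : ∀ x ∈ Ω, f x ^ 2 • gradq (fun y => (W y).re / f y) x
      = -rotq (fun y => f y • im (W y)) x := fun x hx => by
    rw [sq_smul_gradq_div (hC1 hW₀ hx) (hC1 hf hx) (hf0 x hx), (hvek x hx).2, neg_sub]
  intro p hp
  have hnear {A B : P3 → ℍ[ℂ]} (h : ∀ x ∈ Ω, A x = B x) : A =ᶠ[𝓝 p] B :=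
    eventuallyEq_of_mem (hΩ.mem_nhds hp) h
  have hdiv : divq (fun x => f x ^ 2 • gradq (fun y => (W y).re / f y) x) p = 0 := by
    rw [divq_congr_of_eventuallyEq (hnear hrot), divq_neg,
      divq_rotq_eq_zero ((hC2 hf hp).mul (hC2 hW₁ hp)) ((hC2 hf hp).mul (hC2 hW₂ hp))
        ((hC2 hf hp).mul (hC2 hW₃ hp)), neg_zero]
  refine ⟨?_, by simpa [divq, Fin.sum_univ_three] using hdiv, (hvek p hp).1, ?_⟩
  · rw [divq_sq_smul_gradq_div (hC2 hf hp) (hC2 hW₀ hp) (hf0 p hp)] at hdiv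
    calc _ = -(f p)⁻¹ * (f p * lap3 (fun x => (W x).re) p - (W p).re * lap3 f p) := by
          field_simp [hf0 p hp]; ring
      _ = 0 := by rw [hdiv, mul_zero]
  · have hgrad : ∀ x ∈ Ω, (f x ^ 2)⁻¹ • rotq (fun y => f y • im (W y)) x
        = -gradq (fun y => (W y).re / f y) x := fun x hx => by
      rw [← neg_eq_iff_eq_neg.mpr (hrot x hx), smul_neg, smul_smul,
        inv_mul_cancel₀ (pow_ne_zero 2 (hf0 x hx)), one_smul]
    have hφ : ContDiffAt ℝ 2 (fun y => (W y).re / f y) p := by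
      simpa only [div_eq_mul_inv] using (hC2 hW₀ hp).mul ((hC2 hf hp).fun_inv (hf0 p hp))
    rw [rotq_congr_of_eventuallyEq (hnear hgrad), rotq_neg, rotq_gradq_eq_zero hφ, neg_zero]
end
end
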